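/- If a t-matrix X ∈ C^{D₁×D₂} has a TSVD X = U ∘ diag(λ₁,…,λ_Q) ∘ Vᴴ with Q = min(D₁,D₂), Uᴴ∘U = Vᴴ∘V = I and each λ_k nonnegative, then rank(X) = Σ_{k=1}^{Q} rank(λ_k), and for the rank-r truncation X̂ = U ∘ diag(λ₁,…,λ_r, Z_T,…,Z_T) ∘ Vᴴ one has rank(X̂) = Σ_{k=1}^{r} rank(λ_k) ≤ rank(X). -/
import Mathlib


open scoped BigOperators
open scoped Classical

noncomputable section

variable {N : ℕ}

/-- The underlying group `G = ZMod I₁ × ⋯ × ZMod I_N`. -/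
abbrev G (I : Fin N → ℕ) : Type := ∀ n : Fin N, ZMod (I n)

/-- A t-scalar is a function `G → ℂ`. -/
abbrev TS (I : Fin N → ℕ) : Type := G I → ℂ

variable {I : Fin N → ℕ} [∀ n, NeZero (I n)]

/-- Circular convolution product of t-scalars. -/
def tconv (X Y : TS I) : TS I := fun i => ∑ j, X (i - j) * Y j

/-- The zero t-scalar. -/
def ZT : TS I := fun _ => 0

/-- The identity t-scalar: the indicator function of `0 ∈ G`. -/
def ET : TS I := fun i => if i = 0 then 1 else 0

/-- The Fourier transform of a t-scalar:
`F(X)(i) = Σ_j X(j)·exp(2π√−1·Σ_n i_n·j_n / I_n)`. -/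
def tfourier (X : TS I) : TS I :=
  fun i => ∑ j, X j * Complex.exp (2 * Real.pi * Complex.I *
      ∑ n, ((i n).val : ℂ) * ((j n).val : ℂ) / ((I n : ℕ) : ℂ))

/-- Conjugate of a t-scalar: `conj(X)(i) = complex conjugate of X(−i)`. -/
def tconj (X : TS I) : TS I := fun i => starRingEnd ℂ (X (-i))

/-- A t-scalar is self-conjugate if `X = conj(X)`. -/
def SelfConj (X : TS I) : Prop := X = tconj X

/-- Real part `Re(X) = 2⁻¹(X + conj X)` of a t-scalar. -/
def tRe (X : TS I) : TS I := fun i => (X i + tconj X i) / 2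

/-- Imaginary part `Im(X) = (2√−1)⁻¹(X − conj X)` of a t-scalar. -/
def tIm (X : TS I) : TS I := fun i => (X i - tconj X i) / (2 * Complex.I)

/-- A t-scalar is nonnegative if it is `Y ∘ Y` for some self-conjugate `Y`. -/
def TNonneg (X : TS I) : Prop := ∃ Y : TS I, SelfConj Y ∧ X = tconv Y Y

/-- A t-scalar is invertible if `X ∘ Y = E_T` for some `Y`. -/
def TInv (X : TS I) : Prop := ∃ Y : TS I, tconv X Y = ET

/-- t-matrix multiplication: entrywise convolution products. -/
def tmul {a b c : ℕ} (A : Matrix (Fin a) (Fin b) (TS I)) (B : Matrix (Fin b) (Fin c) (TS I)) :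
    Matrix (Fin a) (Fin c) (TS I) :=
  Matrix.of fun α γ => ∑ β, tconv (A α β) (B β γ)

/-- Conjugate transpose of a t-matrix. -/
def htrans {a b : ℕ} (A : Matrix (Fin a) (Fin b) (TS I)) : Matrix (Fin b) (Fin a) (TS I) :=
  Matrix.of fun β α => tconj (A α β)

/-- The identity t-matrix. -/
def tId (Q : ℕ) : Matrix (Fin Q) (Fin Q) (TS I) :=
  Matrix.of fun α β => if α = β then ET else ZT

/-- Diagonal t-matrix with the given t-scalar diagonal entries. -/
def tdiag {Q : ℕ} (lam : Fin Q → TS I) : Matrix (Fin Q) (Fin Q) (TS I) :=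
  Matrix.of fun k l => if k = l then lam k else ZT

/-- The `i`-th Fourier fslice of a t-matrix. -/
def fslice {a b : ℕ} (A : Matrix (Fin a) (Fin b) (TS I)) (i : G I) :
    Matrix (Fin a) (Fin b) ℂ :=
  Matrix.of fun α β => tfourier (A α β) i

/-- Frobenius norm of a complex matrix. -/
def frob {a b : ℕ} (M : Matrix (Fin a) (Fin b) ℂ) : ℝ :=
  Real.sqrt (∑ α, ∑ β, Complex.normSq (M α β))


/-! ### Auxiliary lemmas -/

namespace RankViaTSVD

open Complex Matrix

/-- The character used in the Fourier transform. -/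
def chi (I : Fin N → ℕ) (i j : G I) : ℂ :=
  Complex.exp (2 * Real.pi * Complex.I *
    ∑ n, ((i n).val : ℂ) * ((j n).val : ℂ) / ((I n : ℕ) : ℂ))

lemma tfourier_eq_chi (X : TS I) (i : G I) :
    tfourier X i = ∑ j, X j * chi I i j := rfl

lemma coord (m : ℕ) [NeZero m] (a : ℕ) (x y : ZMod m) :
    Complex.exp (2 * Real.pi * Complex.I * ((a : ℂ) * (((x + y).val : ℕ) : ℂ) / (m : ℂ))) =
      Complex.exp (2 * Real.pi * Complex.I * ((a : ℂ) * ((x.val : ℕ) : ℂ) / (m : ℂ))) *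
      Complex.exp (2 * Real.pi * Complex.I * ((a : ℂ) * ((y.val : ℕ) : ℂ) / (m : ℂ))) := by
  have hm : (m : ℂ) ≠ 0 := Nat.cast_ne_zero.2 (NeZero.ne m)
  set q := (x.val + y.val) / m with hq
  have h : x.val + y.val = (x + y).val + m * q := by
    rw [ZMod.val_add]; exact (Nat.mod_add_div _ _).symm
  have hc : ((x.val : ℂ)) + (y.val : ℂ) = ((x + y).val : ℂ) + (m : ℂ) * (q : ℂ) := by
    exact_mod_cast congrArg (Nat.cast : ℕ → ℂ) h
  rw [← Complex.exp_add]
  have key : 2 * Real.pi * Complex.I * ((a : ℂ) * ((x.val : ℕ) : ℂ) / (m : ℂ)) +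
      2 * Real.pi * Complex.I * ((a : ℂ) * ((y.val : ℕ) : ℂ) / (m : ℂ)) =
      2 * Real.pi * Complex.I * ((a : ℂ) * (((x + y).val : ℕ) : ℂ) / (m : ℂ)) +
      ((a * q : ℕ) : ℂ) * (2 * Real.pi * Complex.I) := by
    have hq2 : ((a * q : ℕ) : ℂ) = (a : ℂ) * (q : ℂ) := by push_cast; ring
    rw [hq2]
    have hinv : (m : ℂ) * (m : ℂ)⁻¹ = 1 := mul_inv_cancel₀ hm
    linear_combination (2 * Real.pi * Complex.I * (a : ℂ) * (m : ℂ)⁻¹) * hc +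
      (2 * Real.pi * Complex.I * (a : ℂ) * (q : ℂ)) * hinv
  rw [key, Complex.exp_add]
  have h1 : Complex.exp (((a * q : ℕ) : ℂ) * (2 * Real.pi * Complex.I)) = 1 := by
    exact_mod_cast Complex.exp_int_mul_two_pi_mul_I (a * q)
  rw [h1, mul_one]

lemma chi_eq_prod {I : Fin N → ℕ} [∀ n, NeZero (I n)] (i j : G I) :
    chi I i j = ∏ n, Complex.exp (2 * Real.pi * Complex.I *
      (((i n).val : ℂ) * ((j n).val : ℂ) / ((I n : ℕ) : ℂ))) := by
  rw [chi, Finset.mul_sum, Complex.exp_sum]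

lemma chi_add {I : Fin N → ℕ} [∀ n, NeZero (I n)] (i j k : G I) :
    chi I i (j + k) = chi I i j * chi I i k := by
  rw [chi_eq_prod, chi_eq_prod, chi_eq_prod, ← Finset.prod_mul_distrib]
  refine Finset.prod_congr rfl fun n _ => ?_
  have := coord (I n) ((i n).val) (j n) (k n)
  simpa using this

lemma chi_zero {I : Fin N → ℕ} [∀ n, NeZero (I n)] (i : G I) : chi I i 0 = 1 := by
  simp [chi]

lemma chi_ne_zero {I : Fin N → ℕ} [∀ n, NeZero (I n)] (i j : G I) : chi I i j ≠ 0 :=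
  Complex.exp_ne_zero _

lemma conj_chi_mul {I : Fin N → ℕ} [∀ n, NeZero (I n)] (i j : G I) :
    (starRingEnd ℂ) (chi I i j) * chi I i j = 1 := by
  rw [chi, ← Complex.exp_conj, ← Complex.exp_add]
  have hS : (starRingEnd ℂ) (∑ n, ((i n).val : ℂ) * ((j n).val : ℂ) / ((I n : ℕ) : ℂ)) =
      ∑ n, ((i n).val : ℂ) * ((j n).val : ℂ) / ((I n : ℕ) : ℂ) := by
    rw [map_sum]
    exact Finset.sum_congr rfl fun n _ => by
      rw [map_div₀, _root_.map_mul, Complex.conj_natCast, Complex.conj_natCast,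
        Complex.conj_natCast]
  have : (starRingEnd ℂ) (2 * Real.pi * Complex.I *
      ∑ n, ((i n).val : ℂ) * ((j n).val : ℂ) / ((I n : ℕ) : ℂ)) =
      -(2 * Real.pi * Complex.I *
      ∑ n, ((i n).val : ℂ) * ((j n).val : ℂ) / ((I n : ℕ) : ℂ)) := by
    have c2 : (starRingEnd ℂ) 2 = 2 := map_ofNat _ 2
    rw [_root_.map_mul, hS, _root_.map_mul, _root_.map_mul, Complex.conj_I, c2,
      Complex.conj_ofReal]
    ring
  rw [this, neg_add_cancel, Complex.exp_zero]

lemma chi_neg {I : Fin N → ℕ} [∀ n, NeZero (I n)] (i k : G I) :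
    chi I i (-k) = (starRingEnd ℂ) (chi I i k) := by
  have h1 : chi I i (-k) * chi I i k = 1 := by
    rw [← chi_add]; simp [chi_zero]
  have h2 := conj_chi_mul i k
  exact mul_right_cancel₀ (chi_ne_zero i k) (h1.trans h2.symm)

variable {I : Fin N → ℕ} [∀ n, NeZero (I n)]

lemma tfourier_tconv (X Y : TS I) (i : G I) :
    tfourier (tconv X Y) i = tfourier X i * tfourier Y i := by
  calc tfourier (tconv X Y) i
      = ∑ a, ∑ b, X (a - b) * Y b * chi I i a := by
        rw [tfourier_eq_chi]
        exact Finset.sum_congr rfl fun a _ => by rw [tconv, Finset.sum_mul]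
    _ = ∑ b, ∑ a, X (a - b) * Y b * chi I i a := Finset.sum_comm
    _ = ∑ b, ∑ c, X c * chi I i c * (Y b * chi I i b) := by
        refine Finset.sum_congr rfl fun b _ => ?_
        refine Fintype.sum_equiv (Equiv.subRight b) _ _ fun a => ?_
        simp only [Equiv.subRight_apply]
        rw [show chi I i a = chi I i (a - b) * chi I i b by rw [← chi_add, sub_add_cancel]]
        ring
    _ = tfourier X i * tfourier Y i := by
        rw [tfourier_eq_chi, tfourier_eq_chi]
        simp only [← Finset.sum_mul]
        rw [← Finset.mul_sum]

lemma tfourier_sum {κ : Type*} (s : Finset κ) (f : κ → TS I) (i : G I) :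
    tfourier (∑ b ∈ s, f b) i = ∑ b ∈ s, tfourier (f b) i := by
  simp only [tfourier, Finset.sum_apply, Finset.sum_mul]
  exact Finset.sum_comm

lemma tfourier_ZT (i : G I) : tfourier (ZT : TS I) i = 0 := by
  simp [tfourier, ZT]

lemma tfourier_ET (i : G I) : tfourier (ET : TS I) i = 1 := by
  rw [tfourier_eq_chi]
  rw [show (∑ j, (ET : TS I) j * chi I i j) = ∑ j, if j = 0 then chi I i j else 0 by
    exact Finset.sum_congr rfl fun j _ => by by_cases h : j = 0 <;> simp [ET, h]]
  rw [Finset.sum_ite_eq' Finset.univ 0 (chi I i)]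
  simp [chi_zero]

lemma tfourier_tconj (X : TS I) (i : G I) :
    tfourier (tconj X) i = (starRingEnd ℂ) (tfourier X i) := by
  rw [tfourier_eq_chi, tfourier_eq_chi, map_sum]
  refine Fintype.sum_equiv (Equiv.neg (G I)) _ _ fun k => ?_
  simp only [Equiv.neg_apply, tconj]
  rw [_root_.map_mul, chi_neg, Complex.conj_conj]

lemma fslice_tmul {a b c : ℕ} (A : Matrix (Fin a) (Fin b) (TS I))
    (B : Matrix (Fin b) (Fin c) (TS I)) (i : G I) :
    fslice (tmul A B) i = fslice A i * fslice B i := by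
  ext α γ
  simp only [fslice, tmul, Matrix.of_apply, Matrix.mul_apply, tfourier_sum, tfourier_tconv]

lemma fslice_htrans {a b : ℕ} (A : Matrix (Fin a) (Fin b) (TS I)) (i : G I) :
    fslice (htrans A) i = (fslice A i)ᴴ := by
  ext β α
  simp only [fslice, htrans, Matrix.of_apply, Matrix.conjTranspose_apply, tfourier_tconj]
  rfl

lemma fslice_tId (Q : ℕ) (i : G I) : fslice (tId Q : Matrix (Fin Q) (Fin Q) (TS I)) i = 1 := by
  ext α β
  simp only [fslice, tId, Matrix.of_apply, Matrix.one_apply,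
    apply_ite (fun X : TS I => tfourier X i), tfourier_ET, tfourier_ZT]

lemma fslice_tdiag {Q : ℕ} (lam : Fin Q → TS I) (i : G I) :
    fslice (tdiag lam) i = Matrix.diagonal fun k => tfourier (lam k) i := by
  ext k l
  simp only [fslice, tdiag, Matrix.of_apply, Matrix.diagonal_apply,
    apply_ite (fun X : TS I => tfourier X i), tfourier_ZT]

lemma rank_umul {a q c : ℕ} {Um : Matrix (Fin a) (Fin q) ℂ} (h : Umᴴ * Um = 1)
    (M : Matrix (Fin q) (Fin c) ℂ) : (Um * M).rank = M.rank := by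
  refine le_antisymm (Matrix.rank_mul_le_right _ _) ?_
  calc M.rank = (Umᴴ * (Um * M)).rank := by rw [← Matrix.mul_assoc, h, Matrix.one_mul]
  _ ≤ (Um * M).rank := Matrix.rank_mul_le_right _ _

lemma rank_mulv {b q c : ℕ} {Vm : Matrix (Fin b) (Fin q) ℂ} (h : Vmᴴ * Vm = 1)
    (M : Matrix (Fin c) (Fin q) ℂ) : (M * Vmᴴ).rank = M.rank := by
  refine le_antisymm (Matrix.rank_mul_le_left _ _) ?_
  calc M.rank = ((M * Vmᴴ) * Vm).rank := by rw [Matrix.mul_assoc, h, Matrix.mul_one]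
  _ ≤ (M * Vmᴴ).rank := Matrix.rank_mul_le_left _ _

lemma rank_diag_count {q : ℕ} (w : Fin q → ℂ) :
    (Matrix.diagonal w).rank = ∑ k, if w k ≠ 0 then 1 else 0 := by
  rw [Matrix.rank_diagonal, Fintype.card_subtype, Finset.card_filter]

end RankViaTSVD

open RankViaTSVD Matrix

/-- for a t-matrix with a TSVD, `rank(X) = Σ_{k=1}^{Q} rank(λ_k)`, and
the rank-`r` truncation satisfies `rank(X̂) = Σ_{k=1}^{r} rank(λ_k) ≤ rank(X)` (all
identities and inequalities read Fourier-entrywise; the rank of a t-scalar `λ` has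
Fourier value `1` where `F(λ)(i) ≠ 0` and `0` elsewhere). -/
theorem rank_via_tsvd (N : ℕ) (I : Fin N → ℕ) [∀ n, NeZero (I n)]
    (D₁ D₂ : ℕ) (X : Matrix (Fin D₁) (Fin D₂) (TS I))
    (U : Matrix (Fin D₁) (Fin (min D₁ D₂)) (TS I))
    (V : Matrix (Fin D₂) (Fin (min D₁ D₂)) (TS I))
    (lam : Fin (min D₁ D₂) → TS I)
    (hX : X = tmul U (tmul (tdiag lam) (htrans V)))
    (hU : tmul (htrans U) U = tId (min D₁ D₂))
    (hV : tmul (htrans V) V = tId (min D₁ D₂))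
    (hlam : ∀ k, TNonneg (lam k))
    (r : ℕ) (hr1 : 1 ≤ r) (hrQ : r ≤ min D₁ D₂)
    (Xhat : Matrix (Fin D₁) (Fin D₂) (TS I))
    (hXhat : Xhat =
      tmul U (tmul (tdiag fun k => if (k : ℕ) < r then lam k else ZT) (htrans V))) :
    (∀ i, ((fslice X i).rank : ℕ) =
        ∑ k : Fin (min D₁ D₂), if tfourier (lam k) i ≠ 0 then 1 else 0) ∧
    (∀ i, ((fslice Xhat i).rank : ℕ) =
        ∑ k : Fin (min D₁ D₂), if (k : ℕ) < r ∧ tfourier (lam k) i ≠ 0 then 1 else 0) ∧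
    (∀ i, (fslice Xhat i).rank ≤ (fslice X i).rank) := by
  classical
  have hUf : ∀ i, (fslice U i)ᴴ * fslice U i = 1 := fun i => by
    rw [← fslice_htrans, ← fslice_tmul, hU, fslice_tId]
  have hVf : ∀ i, (fslice V i)ᴴ * fslice V i = 1 := fun i => by
    rw [← fslice_htrans, ← fslice_tmul, hV, fslice_tId]
  have key : ∀ (mu : Fin (min D₁ D₂) → TS I) (i : G I),
      (fslice (tmul U (tmul (tdiag mu) (htrans V))) i).rank =
        ∑ k, if tfourier (mu k) i ≠ 0 then 1 else 0 := by
    intro mu i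
    rw [fslice_tmul, fslice_tmul, fslice_htrans, fslice_tdiag,
      rank_umul (hUf i), rank_mulv (hVf i), rank_diag_count]
  have h1 : ∀ i, ((fslice X i).rank : ℕ) =
      ∑ k : Fin (min D₁ D₂), if tfourier (lam k) i ≠ 0 then 1 else 0 := fun i => by
    rw [hX]; exact key lam i
  have h2 : ∀ i, ((fslice Xhat i).rank : ℕ) =
      ∑ k : Fin (min D₁ D₂), if (k : ℕ) < r ∧ tfourier (lam k) i ≠ 0 then 1 else 0 := fun i => by
    rw [hXhat, key _ i]
    refine Finset.sum_congr rfl fun k _ => ?_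
    by_cases hk : (k : ℕ) < r <;> simp [hk, tfourier_ZT]
  refine ⟨h1, h2, fun i => ?_⟩
  rw [h1 i, h2 i]
  refine Finset.sum_le_sum fun k _ => ?_
  by_cases h : tfourier (lam k) i ≠ 0 <;> by_cases hk : (k : ℕ) < r <;> simp [h, hk]
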